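/- Let n ≥ 1, let H : ℝⁿ → ℝ be a function, let a, b ∈ ℝⁿ, let c ∈ ℝ, and suppose H(ta + (1−t)b) = c for all t ∈ [0,1]. Let f : ℝ → ℝ be differentiable with sup_{t ∈ ℝ} |f'(t)| < 1, and define u : ℝⁿ → ℝ by u(x) = ((b+a)/2)·x + f(((b−a)/2)·x). Then u solves the Hamilton–Jacobi equation H(∇u) = c classically: for every x ∈ ℝⁿ, H(∇u(x)) = c. -/

import Mathlib

open scoped RealInnerProductSpace

/- Writing `v = (b + a)/2` and `w = (b - a)/2`, the gradient of `u` at `x` is `v + f'(w·x) w`,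
and since `|f'| ≤ 1` this is the point `((1 - s)/2) a + ((1 + s)/2) b`, `s = f'(w·x)`, of the
segment `[a, b]`, on which `H` equals `c`. -/

theorem hasGradientAt_inner_add_comp_inner {E : Type*} [NormedAddCommGroup E]
    [InnerProductSpace ℝ E] [CompleteSpace E] {f : ℝ → ℝ} {v w x : E}
    (hf : DifferentiableAt ℝ f ⟪w, x⟫) :
    HasGradientAt (fun y => ⟪v, y⟫ + f ⟪w, y⟫) (v + deriv f ⟪w, x⟫ • w) x := by
  have hv : HasFDerivAt (fun y => ⟪v, y⟫) (innerSL ℝ v) x := (innerSL ℝ v).hasFDerivAt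
  have hfw : HasFDerivAt (fun y => f ⟪w, y⟫) (deriv f ⟪w, x⟫ • innerSL ℝ w) x :=
    hf.hasDerivAt.comp_hasFDerivAt x (innerSL ℝ w).hasFDerivAt
  have hdual : InnerProductSpace.toDual ℝ E (v + deriv f ⟪w, x⟫ • w)
      = innerSL ℝ v + deriv f ⟪w, x⟫ • innerSL ℝ w := by
    ext y
    simp
  rw [hasGradientAt_iff_hasFDerivAt, hdual]
  exact hv.add hfw

theorem inv_two_smul_add_smul_inv_two_smul_sub_mem_segment {V : Type*} [AddCommGroup V]
    [Module ℝ V] (a b : V) {s : ℝ} (hs : |s| ≤ 1) :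
    (2:ℝ)⁻¹ • (b + a) + s • (2:ℝ)⁻¹ • (b - a) ∈ segment ℝ a b := by
  obtain ⟨hs₁, hs₂⟩ := abs_le.mp hs
  refine ⟨(1 - s) / 2, (1 + s) / 2, by linarith, by linarith, by ring, ?_⟩
  simp only [smul_add, smul_sub, smul_smul]
  module

theorem stmt_4_general (n : ℕ) (H : EuclideanSpace ℝ (Fin n) → ℝ)
    (a b : EuclideanSpace ℝ (Fin n)) (c : ℝ)
    (hconst : ∀ t : ℝ, t ∈ Set.Icc (0:ℝ) 1 → H (t • a + (1 - t) • b) = c)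
    (f : ℝ → ℝ) (hf : Differentiable ℝ f)
    (M : ℝ) (hM : M < 1) (hf' : ∀ t : ℝ, |deriv f t| ≤ M)
    (u : EuclideanSpace ℝ (Fin n) → ℝ)
    (hu : ∀ x, u x = ⟪(2:ℝ)⁻¹ • (b + a), x⟫ + f ⟪(2:ℝ)⁻¹ • (b - a), x⟫) :
    ∀ x, H (gradient u x) = c := by
  intro x
  obtain rfl : u = fun y => ⟪(2:ℝ)⁻¹ • (b + a), y⟫ + f ⟪(2:ℝ)⁻¹ • (b - a), y⟫ := funext hu
  rw [(hasGradientAt_inner_add_comp_inner (hf _)).gradient]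
  obtain ⟨t, s, ht, hs, hts, hmem⟩ := inv_two_smul_add_smul_inv_two_smul_sub_mem_segment a b
    ((hf' (⟪(2:ℝ)⁻¹ • (b - a), x⟫)).trans hM.le)
  obtain rfl : s = 1 - t := by linarith
  rw [← hmem]
  exact hconst t ⟨ht, by linarith⟩

theorem stmt_4 (n : ℕ) (hn : 1 ≤ n) (H : EuclideanSpace ℝ (Fin n) → ℝ)
    (a b : EuclideanSpace ℝ (Fin n)) (c : ℝ)
    (hconst : ∀ t : ℝ, t ∈ Set.Icc (0:ℝ) 1 → H (t • a + (1 - t) • b) = c)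
    (f : ℝ → ℝ) (hf : Differentiable ℝ f)
    (M : ℝ) (hM : M < 1) (hf' : ∀ t : ℝ, |deriv f t| ≤ M)
    (u : EuclideanSpace ℝ (Fin n) → ℝ)
    (hu : ∀ x, u x = ⟪(2:ℝ)⁻¹ • (b + a), x⟫ + f ⟪(2:ℝ)⁻¹ • (b - a), x⟫) :
    ∀ x, H (gradient u x) = c :=
  stmt_4_general n H a b c hconst f hf M hM hf' u hu
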